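/- Let Σ be a symmetric positive definite d×d real matrix, F an l×d real matrix with rows F₁,…,F_l, g ∈ ℝˡ, w₀, w₁ ∈ ℝᵈ, and η ≥ 0, ε ≥ 0. Suppose that for every row index r ∈ {1,…,l}: F_r w₀ + g_r + √(F_r Σ F_rᵀ) + (η + ε)·‖F_r‖₂ ≤ 0 and F_r w₁ + g_r + √(F_r Σ F_rᵀ) + (η + ε)·‖F_r‖₂ ≤ 0. Then for every point c ∈ ℝᵈ lying within Euclidean distance η of the line segment from w₀ to w₁ and every p ∈ ℝᵈ with (p−c)ᵀ Σ⁻¹ (p−c) ≤ 1, it holds that F_r p + g_r ≤ −ε·‖F_r‖₂ for every r ∈ {1,…,l}. -/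

import Mathlib

/-!
Write `m` for the point of the segment within distance `η` of `c` and split
`F_r p = F_r (p - c) + F_r (c - m) + F_r m`. Cauchy–Schwarz for the inner product defined by `Σ`
bounds the first term by `√(F_r Σ F_rᵀ)` on the ellipsoid, Euclidean Cauchy–Schwarz bounds the
second by `η ‖F_r‖₂`, and the endpoint conditions pass to `m` because half-spaces are convex.
-/

open Matrix

/-- The Euclidean (2-)norm on `ℝᵈ`. -/
noncomputable def norm2 {d : ℕ} (x : Fin d → ℝ) : ℝ := Real.sqrt (∑ i, x i ^ 2)

/-- `c` lies within Euclidean distance `η` of the line segment from `a` to `b`. -/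
def nearSegment {d : ℕ} (c a b : Fin d → ℝ) (η : ℝ) : Prop :=
  ∃ γ : ℝ, 0 ≤ γ ∧ γ ≤ 1 ∧ norm2 (c - (γ • a + (1 - γ) • b)) ≤ η

lemma dotProduct_mulVec_sq_le {n : Type*} [Fintype n] {S : Matrix n n ℝ} (hS : S.PosSemidef)
    (u v : n → ℝ) : (u ⬝ᵥ (S *ᵥ v)) ^ 2 ≤ (u ⬝ᵥ (S *ᵥ u)) * (v ⬝ᵥ (S *ᵥ v)) := by
  let := S.toSeminormedAddCommGroup hS
  let := S.toInnerProductSpace hS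
  have hinner (x y : n → ℝ) : inner ℝ x y = x ⬝ᵥ (S *ᵥ y) := dotProduct_comm _ _
  simpa only [hinner, sq] using real_inner_mul_inner_self_le u v

lemma dotProduct_le_sqrt_mul_sqrt_inv {n : Type*} [Fintype n] [DecidableEq n]
    {S : Matrix n n ℝ} (hS : S.PosDef) (u x : n → ℝ) :
    u ⬝ᵥ x ≤ √(u ⬝ᵥ (S *ᵥ u)) * √(x ⬝ᵥ (S⁻¹ *ᵥ x)) := by
  have hcs := dotProduct_mulVec_sq_le hS.posSemidef u (S⁻¹ *ᵥ x)
  rw [mulVec_mulVec, mul_nonsing_inv _ (S.isUnit_iff_isUnit_det.mp hS.isUnit), one_mulVec,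
    dotProduct_comm (S⁻¹ *ᵥ x)] at hcs
  rw [← Real.sqrt_mul (by simpa using hS.posSemidef.dotProduct_mulVec_nonneg u)]
  exact Real.le_sqrt_of_sq_le hcs

lemma norm2_eq_norm {d : ℕ} (x : Fin d → ℝ) : norm2 x = ‖WithLp.toLp 2 x‖ := by
  simp [norm2, EuclideanSpace.norm_eq]

lemma dotProduct_le_norm2_mul_norm2 {d : ℕ} (u v : Fin d → ℝ) : u ⬝ᵥ v ≤ norm2 u * norm2 v := by
  rw [norm2_eq_norm, norm2_eq_norm]
  simpa [EuclideanSpace.inner_toLp_toLp, dotProduct_comm] using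
    real_inner_le_norm (WithLp.toLp 2 u) (WithLp.toLp 2 v)

theorem negated_swarm_predicate_along_tube_general (d l : ℕ)
    (S : Matrix (Fin d) (Fin d) ℝ) (hpd : S.PosDef)
    (F : Matrix (Fin l) (Fin d) ℝ) (g : Fin l → ℝ)
    (w₀ w₁ : Fin d → ℝ) (η ε : ℝ)
    (h₀ : ∀ r : Fin l,
      F r ⬝ᵥ w₀ + g r + Real.sqrt (F r ⬝ᵥ (S *ᵥ F r)) + (η + ε) * norm2 (F r) ≤ 0)
    (h₁ : ∀ r : Fin l,
      F r ⬝ᵥ w₁ + g r + Real.sqrt (F r ⬝ᵥ (S *ᵥ F r)) + (η + ε) * norm2 (F r) ≤ 0) :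
    ∀ c : Fin d → ℝ, nearSegment c w₀ w₁ η →
      ∀ p : Fin d → ℝ, (p - c) ⬝ᵥ (S⁻¹ *ᵥ (p - c)) ≤ 1 →
        ∀ r : Fin l, F r ⬝ᵥ p + g r ≤ -(ε * norm2 (F r)) := by
  rintro c ⟨γ, hγ₀, hγ₁, hc⟩ p hp r
  set m := γ • w₀ + (1 - γ) • w₁
  have hellipsoid : F r ⬝ᵥ (p - c) ≤ √(F r ⬝ᵥ (S *ᵥ F r)) :=
    calc F r ⬝ᵥ (p - c) ≤ √(F r ⬝ᵥ (S *ᵥ F r)) * √((p - c) ⬝ᵥ (S⁻¹ *ᵥ (p - c))) :=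
          dotProduct_le_sqrt_mul_sqrt_inv hpd _ _
      _ ≤ √(F r ⬝ᵥ (S *ᵥ F r)) := by grw [hp, Real.sqrt_one, mul_one]
  have htube : F r ⬝ᵥ (c - m) ≤ norm2 (F r) * η :=
    (dotProduct_le_norm2_mul_norm2 _ _).trans (by gcongr; exact Real.sqrt_nonneg _)
  have hsegment : F r ⬝ᵥ m ≤ -(g r + √(F r ⬝ᵥ (S *ᵥ F r)) + (η + ε) * norm2 (F r)) :=
    convex_halfSpace_le ⟨dotProduct_add (F r), fun a x => dotProduct_smul a (F r) x⟩ _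
      (show F r ⬝ᵥ w₀ ≤ _ by linarith [h₀ r]) (show F r ⬝ᵥ w₁ ≤ _ by linarith [h₁ r])
      hγ₀ (sub_nonneg.2 hγ₁) (add_sub_cancel γ 1)
  have hsplit : F r ⬝ᵥ p = F r ⬝ᵥ (p - c) + F r ⬝ᵥ (c - m) + F r ⬝ᵥ m := by
    simp only [dotProduct_sub]; ring
  linarith

/-- **negated-predicate version after Lemma 3 of the paper.** If for
every row `r` of `F` the endpoint upper-bound margin conditions
`F_r w + g_r + √(F_r S F_rᵀ) + (η+ε)‖F_r‖₂ ≤ 0` hold at both segment endpoints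
`w₀, w₁`, then for every center `c` in the `η`-tube of the segment and every `p` in
the ellipsoid with shape `S` centered at `c`, it holds that
`F_r p + g_r ≤ -ε‖F_r‖₂` for every row `r`. -/
theorem negated_swarm_predicate_along_tube (d l : ℕ)
    (S : Matrix (Fin d) (Fin d) ℝ) (hpd : S.PosDef)
    (F : Matrix (Fin l) (Fin d) ℝ) (g : Fin l → ℝ)
    (w₀ w₁ : Fin d → ℝ) (η ε : ℝ) (hη : 0 ≤ η) (hε : 0 ≤ ε)
    (h₀ : ∀ r : Fin l,
      F r ⬝ᵥ w₀ + g r + Real.sqrt (F r ⬝ᵥ (S *ᵥ F r)) + (η + ε) * norm2 (F r) ≤ 0)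
    (h₁ : ∀ r : Fin l,
      F r ⬝ᵥ w₁ + g r + Real.sqrt (F r ⬝ᵥ (S *ᵥ F r)) + (η + ε) * norm2 (F r) ≤ 0) :
    ∀ c : Fin d → ℝ, nearSegment c w₀ w₁ η →
      ∀ p : Fin d → ℝ, (p - c) ⬝ᵥ (S⁻¹ *ᵥ (p - c)) ≤ 1 →
        ∀ r : Fin l, F r ⬝ᵥ p + g r ≤ -(ε * norm2 (F r)) :=
  negated_swarm_predicate_along_tube_general d l S hpd F g w₀ w₁ η ε h₀ h₁
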